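/- With t_i, t_j as above and n ≥ 3, the matrix t_i t_j has exactly one real eigenvalue λ with λ > 1, this eigenvalue has algebraic multiplicity one, and its inverse λ^{-1} is also an eigenvalue; moreover 1 is an eigenvalue of multiplicity m−2. -/
import Mathlib


open Polynomial

/-- The matrix `t j`: the identity matrix with its `j`-th column replaced by the
vector `v_j` which has entry `-1` in position `j` and entry `n` elsewhere. -/
def tmat (m : ℕ) (n : ℝ) (j : Fin m) : Matrix (Fin m) (Fin m) ℝ :=
  Matrix.of fun k l => if l = j then (if k = j then -1 else n) else (if k = l then 1 else 0)

lemma sum_two {m : ℕ} {i j : Fin m} (hij : i ≠ j) (f : Fin m → ℝ)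
    (h : ∀ p, p ≠ i → p ≠ j → f p = 0) : ∑ p, f p = f i + f j := by
  rw [← Finset.sum_pair hij]
  refine (Finset.sum_subset (Finset.subset_univ _) ?_).symm
  intro p _ hp
  simp only [Finset.mem_insert, Finset.mem_singleton, not_or] at hp
  exact h p hp.1 hp.2

lemma tmat_mul_apply (m : ℕ) (n : ℝ) {i j : Fin m} (hij : i ≠ j) (k l : Fin m) :
    (tmat m n i * tmat m n j) k l =
      if l = i then (if k = i then -1 else n)
      else if l = j then (if k = i then -n else if k = j then n^2-1 else n^2+n)
      else if k = l then 1 else 0 := by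
  rw [Matrix.mul_apply]
  by_cases hl : l = j
  · by_cases hk : k = i
    · rw [Finset.sum_eq_single i (fun p _ hp => by simp [tmat, hp, hk, Ne.symm hp])
        (by simp)]
      simp [tmat, hl, hk, hij, Ne.symm hij]
    · rw [sum_two (show i ≠ k from Ne.symm hk) _
        (fun p hpi hpk => by simp [tmat, hpi, Ne.symm hpk])]
      by_cases hkj : k = j
      · simp [tmat, hl, hk, hkj, hij, Ne.symm hij]; ring
      · simp [tmat, hl, hk, hkj, hij, Ne.symm hij]; ring
  · rw [Finset.sum_eq_single l (fun p _ hp => by simp [tmat, hl, hp]) (by simp)]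
    simp [tmat, hl]

lemma charpoly_one_fin (r : ℕ) : (1 : Matrix (Fin r) (Fin r) ℝ).charpoly = (X - C 1)^r := by
  have h : Matrix.charmatrix (1 : Matrix (Fin r) (Fin r) ℝ)
      = Matrix.diagonal (fun _ => X - C 1) := by
    ext a b
    by_cases h : a = b
    · subst h; simp
    · simp [Matrix.charmatrix_apply_ne _ _ _ h, Matrix.diagonal_apply_ne _ h,
        Matrix.one_apply_ne h]
  rw [Matrix.charpoly, h, Matrix.det_diagonal]
  simp

lemma charpoly_B (n : ℝ) :
    (!![(-1:ℝ), -n; n, n^2-1]).charpoly = X^2 - C (n^2-2)*X + C 1 := by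
  rw [Matrix.charpoly, Matrix.det_fin_two]
  simp [Matrix.charmatrix_apply_eq, Matrix.charmatrix_apply_ne, map_sub, map_neg, map_pow,
    map_ofNat]
  ring

lemma tmat_charpoly (m : ℕ) (hm : 2 ≤ m) (n : ℝ) {i j : Fin m} (hij : i ≠ j) :
    (tmat m n i * tmat m n j).charpoly
      = (X^2 - C (n^2-2)*X + C 1) * (X - C 1)^(m-2) := by
  have h0 : 0 < m := by omega
  have h1 : 1 < m := by omega
  have h2 : m = 2 + (m - 2) := by omega
  set i0 : Fin m := ⟨0, h0⟩ with hi0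
  set i1 : Fin m := ⟨1, h1⟩ with hi1
  set τ : Equiv.Perm (Fin m) := Equiv.swap i i0 with hτ
  have hτi : τ i = i0 := Equiv.swap_apply_left i i0
  have hji : τ j ≠ i0 := by
    rw [← hτi]
    exact fun h => hij (τ.injective h).symm
  set σ : Equiv.Perm (Fin m) := τ.trans (Equiv.swap (τ j) i1) with hσ
  have hσi : σ i = i0 := by
    simp only [hσ, Equiv.trans_apply, hτi]
    exact Equiv.swap_apply_of_ne_of_ne (Ne.symm hji) (by simp [hi0, hi1, Fin.ext_iff])
  have hσj : σ j = i1 := by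
    simp only [hσ, Equiv.trans_apply]
    exact Equiv.swap_apply_left _ _
  set e : Fin m ≃ Fin 2 ⊕ Fin (m-2) :=
    σ.trans ((finCongr h2).trans finSumFinEquiv.symm) with he
  have hei : e i = Sum.inl 0 := by
    simp only [he, Equiv.trans_apply, hσi]
    rw [Equiv.symm_apply_eq]
    apply Fin.val_injective
    simp [hi0]
  have hej : e j = Sum.inl 1 := by
    simp only [he, Equiv.trans_apply, hσj]
    rw [Equiv.symm_apply_eq]
    apply Fin.val_injective
    simp [hi1]
  have hsi : e.symm (Sum.inl 0) = i := by rw [← hei, Equiv.symm_apply_apply]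
  have hsj : e.symm (Sum.inl 1) = j := by rw [← hej, Equiv.symm_apply_apply]
  have hsr : ∀ c : Fin (m-2), e.symm (Sum.inr c) ≠ i ∧ e.symm (Sum.inr c) ≠ j := by
    intro c
    constructor <;> intro h
    · have := congrArg e h; rw [Equiv.apply_symm_apply, hei] at this; simp at this
    · have := congrArg e h; rw [Equiv.apply_symm_apply, hej] at this; simp at this
  set B : Matrix (Fin 2) (Fin 2) ℝ := !![(-1:ℝ), -n; n, n^2-1] with hB
  set Cm : Matrix (Fin (m-2)) (Fin 2) ℝ :=
    Matrix.of (fun _ b => if b = 0 then n else n^2+n) with hCm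
  have hre : Matrix.reindex e e (tmat m n i * tmat m n j) = Matrix.fromBlocks B 0 Cm 1 := by
    ext x y
    rw [Matrix.reindex_apply, Matrix.submatrix_apply, tmat_mul_apply m n hij]
    rcases x with a | c <;> rcases y with b | c'
    · fin_cases a <;> fin_cases b <;>
        simp [hsi, hsj, hij, Ne.symm hij, hB]
    · obtain ⟨hc1, hc2⟩ := hsr c'
      fin_cases a <;> simp [hsi, hsj, hc1, hc2, Ne.symm hc1, Ne.symm hc2]
    · obtain ⟨hc1, hc2⟩ := hsr c
      fin_cases b <;> simp [hsi, hsj, hc1, hc2, hCm, Ne.symm hij]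
    · obtain ⟨hc1, hc2⟩ := hsr c
      obtain ⟨hd1, hd2⟩ := hsr c'
      by_cases h : c = c'
      · subst h; simp [hd1, hd2, Matrix.one_apply]
      · have : e.symm (Sum.inr c) ≠ e.symm (Sum.inr c') := fun hh => h (by
          simpa using e.symm.injective hh)
        simp [hd1, hd2, this, Matrix.one_apply, h]
  calc (tmat m n i * tmat m n j).charpoly
      = (Matrix.reindex e e (tmat m n i * tmat m n j)).charpoly :=
        (Matrix.charpoly_reindex e _).symm
    _ = (Matrix.fromBlocks B 0 Cm 1).charpoly := by rw [hre]
    _ = B.charpoly * (1 : Matrix (Fin (m-2)) (Fin (m-2)) ℝ).charpoly :=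
        Matrix.charpoly_fromBlocks_zero₁₂ B Cm 1
    _ = (X^2 - C (n^2-2)*X + C 1) * (X - C 1)^(m-2) := by
        rw [charpoly_B, charpoly_one_fin]

/-- For `n ≥ 3`, `t_i t_j` has exactly one real eigenvalue `λ > 1`, with algebraic
multiplicity one; `λ⁻¹` is also an eigenvalue, and `1` is an eigenvalue of
multiplicity `m − 2`. (Eigenvalues are roots of the characteristic polynomial.) -/
theorem stmt4 (m : ℕ) (hm : 2 ≤ m) (n : ℕ) (hn : 3 ≤ n) (i j : Fin m) (hij : i ≠ j) :
    ∃ lam : ℝ, 1 < lam ∧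
      (tmat m (n : ℝ) i * tmat m (n : ℝ) j).charpoly.IsRoot lam ∧
      (∀ mu : ℝ, 1 < mu → (tmat m (n : ℝ) i * tmat m (n : ℝ) j).charpoly.IsRoot mu → mu = lam) ∧
      ((tmat m (n : ℝ) i * tmat m (n : ℝ) j).charpoly.rootMultiplicity lam = 1) ∧
      (tmat m (n : ℝ) i * tmat m (n : ℝ) j).charpoly.IsRoot lam⁻¹ ∧
      ((tmat m (n : ℝ) i * tmat m (n : ℝ) j).charpoly.rootMultiplicity 1 = m - 2) := by
  have hcp := tmat_charpoly m hm (n : ℝ) hij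
  have hn' : (3:ℝ) ≤ (n:ℝ) := by exact_mod_cast hn
  set d : ℝ := (n:ℝ)^2 - 2 with hd
  have hd7 : 7 ≤ d := by nlinarith
  have hdisc : (0:ℝ) < d^2 - 4 := by nlinarith
  set s : ℝ := Real.sqrt (d^2 - 4) with hs
  have hs0 : 0 < s := Real.sqrt_pos.mpr hdisc
  have hs2 : s^2 = d^2 - 4 := Real.sq_sqrt hdisc.le
  set lam : ℝ := (d + s)/2 with hlam
  set mu : ℝ := (d - s)/2 with hmu
  have hsum : lam + mu = d := by rw [hlam, hmu]; ring
  have hprod : lam * mu = 1 := by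
    rw [hlam, hmu]
    have : (d + s)/2 * ((d - s)/2) = (d^2 - s^2)/4 := by ring
    rw [this, hs2]; ring
  have hlam1 : 1 < lam := by rw [hlam]; linarith
  have hmu1 : mu < 1 := by
    nlinarith [hprod, hlam1]
  have hlamne0 : lam ≠ 0 := by linarith
  have hmuinv : mu = lam⁻¹ := by
    field_simp
    linarith [hprod]
  have hqfact : (X^2 - C d * X + C 1 : ℝ[X]) = (X - C lam) * (X - C mu) := by
    rw [show d = lam + mu from hsum.symm, show (1:ℝ) = lam * mu from hprod.symm,
      map_add, map_mul]
    ring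
  rw [hqfact] at hcp
  have hlammu : lam ≠ mu := by
    intro h
    rw [hlam, hmu] at h
    have : s = 0 := by linarith
    exact hs0.ne' this
  have hlamne1 : lam ≠ 1 := by linarith
  have hmune1 : mu ≠ 1 := by linarith
  have heval : ∀ x : ℝ, (tmat m (n:ℝ) i * tmat m (n:ℝ) j).charpoly.eval x
      = (x - lam) * (x - mu) * (x - 1)^(m-2) := by
    intro x
    rw [hcp]
    simp [eval_mul, eval_pow]
  refine ⟨lam, hlam1, ?_, ?_, ?_, ?_, ?_⟩
  · show _ = _
    rw [heval]; simp
  · intro x hx hroot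
    have h := hroot
    rw [Polynomial.IsRoot, heval] at h
    rcases mul_eq_zero.mp h with h | h
    · rcases mul_eq_zero.mp h with h | h
      · linarith [sub_eq_zero.mp h]
      · have := sub_eq_zero.mp h; linarith
    · have h1 : x - 1 = 0 := (pow_eq_zero_iff'.mp h).1
      linarith
  · have hne : (X - C lam) * (X - C mu) * (X - C 1)^(m-2) ≠ 0 := by
      apply mul_ne_zero (mul_ne_zero (X_sub_C_ne_zero lam) (X_sub_C_ne_zero mu))
      exact pow_ne_zero _ (X_sub_C_ne_zero 1)
    rw [hcp, Polynomial.rootMultiplicity_mul hne,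
      Polynomial.rootMultiplicity_mul (mul_ne_zero (X_sub_C_ne_zero lam) (X_sub_C_ne_zero mu))]
    rw [Polynomial.rootMultiplicity_X_sub_C_self,
      Polynomial.rootMultiplicity_X_sub_C (x := lam) (y := mu)]
    rw [if_neg hlammu]
    have : Polynomial.rootMultiplicity lam ((X - C 1)^(m-2) : ℝ[X]) = 0 := by
      apply Polynomial.rootMultiplicity_eq_zero
      simp [Polynomial.IsRoot, sub_eq_zero, hlamne1]
    rw [this]
  · show _ = _
    rw [heval, ← hmuinv]; simp
  · have hne : (X - C lam) * (X - C mu) * (X - C 1)^(m-2) ≠ 0 := by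
      apply mul_ne_zero (mul_ne_zero (X_sub_C_ne_zero lam) (X_sub_C_ne_zero mu))
      exact pow_ne_zero _ (X_sub_C_ne_zero 1)
    rw [hcp, Polynomial.rootMultiplicity_mul hne,
      Polynomial.rootMultiplicity_mul (mul_ne_zero (X_sub_C_ne_zero lam) (X_sub_C_ne_zero mu))]
    rw [Polynomial.rootMultiplicity_X_sub_C (x := (1:ℝ)) (y := lam),
      Polynomial.rootMultiplicity_X_sub_C (x := (1:ℝ)) (y := mu),
      Polynomial.rootMultiplicity_X_sub_C_pow (1:ℝ) (m-2)]
    rw [if_neg (Ne.symm hlamne1), if_neg (Ne.symm hmune1)]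
    omega
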